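/- arXiv:1103.4351 — 5 statements merged into one kernel-verified Lean document; each statement's English description precedes it below -/
import Mathlib

section
/- For n > 3, every path of length 2 in the folded hypercube FQ_n is contained in exactly one 4-cycle. -/
/-- The folded hypercube: vertices are elements of `Z_2^n`; two vertices are adjacent
iff they differ in exactly one coordinate or in all `n` coordinates. -/
def FQ (n : ℕ) : SimpleGraph (Fin n → ZMod 2) :=
  SimpleGraph.fromRel (fun x y => (∃ i, y = x + Pi.single i 1) ∨ y = x + 1)

/-!
`FQ n` is the Cayley graph of `(ZMod 2)ⁿ` with generators the unit vectors `eᵢ` and the all-ones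
vector `1`. In a Cayley graph of an elementary abelian 2-group, a 2-path `v + a, v, v + b` closes
into the 4-cycle through `v + a + b`; any other common neighbour `v + a + c = v + b + d` of its ends
gives a generator `d = a + c + b`, which for `c ≠ b` is a sum of three distinct generators. For
`n ≥ 4` no such sum is a generator: three distinct unit vectors add up to a vector of weight 3, and
`eᵢ + eⱼ + 1` (with `i ≠ j`) to one of weight `n - 2`.
-/

open SimpleGraph

section ElementaryAbelian

variable {G : Type*} [AddCommGroup G] [Module (ZMod 2) G] {s : Set G}

lemma addCayley_adj_iff_exists_eq_add {u v : G} :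
    (addCayley s).Adj u v ↔ u ≠ v ∧ ∃ g ∈ s, v = u + g := by
  have (g : G) : u = v + g ↔ v = u + g := by
    constructor <;> rintro rfl <;> rw [add_assoc, ZModModule.add_self, add_zero]
  simp only [addCayley_adj', this, or_self, eq_comm (a := u + _)]

theorem addCayley_existsUnique_commonNeighbor_ne
    (hs : ∀ a ∈ s, ∀ b ∈ s, ∀ c ∈ s, a + b + c ∈ s → a = b ∨ a = c ∨ b = c)
    {u v w : G} (huw : u ≠ w) (hu : (addCayley s).Adj v u) (hw : (addCayley s).Adj v w) :
    ∃! x, x ≠ v ∧ (addCayley s).Adj u x ∧ (addCayley s).Adj w x := by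
  simp only [addCayley_adj_iff_exists_eq_add] at *
  obtain ⟨hvu, a, ha, rfl⟩ := hu
  obtain ⟨hvw, b, hb, rfl⟩ := hw
  have hab : a ≠ b := by rintro rfl; exact huw rfl
  have hne_iff (c : G) : v + a + c ≠ v ↔ a ≠ c := by
    rw [not_iff_not, add_assoc, add_eq_left, add_eq_zero_iff_eq_neg, ZModModule.neg_eq_self]
  refine ⟨v + a + b, ⟨(hne_iff b).2 hab, ⟨?_, b, hb, rfl⟩, ⟨?_, a, ha, add_right_comm _ _ _⟩⟩, ?_⟩
  · simpa only [ne_eq, left_eq_add] using hvw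
  · simpa only [ne_eq, add_right_comm v a b, left_eq_add] using hvu
  · rintro _ ⟨hxv, ⟨-, c, hc, rfl⟩, -, d, hd, hcd⟩
    have hd_eq : d = a + c + b := by
      apply add_left_cancel (a := v + b)
      calc v + b + d = v + a + c + (b + b) := by rw [hcd, ZModModule.add_self, add_zero]
        _ = v + b + (a + c + b) := by abel
    rcases hs a ha c hc b hb (hd_eq ▸ hd) with hac | hab_eq | hcb
    · exact absurd hac ((hne_iff c).1 hxv)
    · exact absurd hab_eq hab
    · rw [hcb]

end ElementaryAbelian

lemma Fin.exists_ne_ne_ne {n : ℕ} (hn : 3 < n) (i j k : Fin n) :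
    ∃ m, m ≠ i ∧ m ≠ j ∧ m ≠ k := by
  obtain ⟨m, -, hm⟩ := Finset.exists_mem_notMem_of_card_lt_card (s := {i, j, k})
    (t := Finset.univ) (by simpa using Finset.card_le_three.trans_lt hn)
  simp only [Finset.mem_insert, Finset.mem_singleton, not_or] at hm
  exact ⟨m, hm⟩

namespace FQ

def gens (n : ℕ) : Set (Fin n → ZMod 2) := Set.range (fun i => Pi.single i 1) ∪ {1}

lemma eq_addCayley (n : ℕ) : FQ n = addCayley (gens n) := by
  unfold FQ addCayley
  congr! 3 with x y
  simp only [gens, Set.mem_union, Set.mem_range, Set.mem_singleton_iff, or_and_right, exists_or,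
    exists_exists_eq_and, exists_eq_left, eq_comm (b := y)]

variable {n : ℕ}

lemma eq_of_single_add_single_add_one_mem (hn : 3 < n) {i j : Fin n}
    (h : Pi.single i 1 + Pi.single j 1 + 1 ∈ gens n) : i = j := by
  rcases h with ⟨l, hl⟩ | hl
  · obtain ⟨m, hmi, hmj, hml⟩ := Fin.exists_ne_ne_ne hn i j l
    simpa [Pi.single_apply, hmi, hmj, hml] using congr_fun hl m
  · by_contra hij
    simpa [Pi.single_apply, hij] using congr_fun hl i

lemma eq_or_eq_or_eq_of_single_add_single_add_single_mem (hn : 3 < n) {i j k : Fin n}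
    (h : Pi.single i 1 + Pi.single j 1 + Pi.single k 1 ∈ gens n) : i = j ∨ i = k ∨ j = k := by
  rcases h with ⟨l, hl⟩ | hl
  · by_contra! hne
    have hil : i = l := by simpa [Pi.single_apply, hne.1, hne.2.1] using congr_fun hl i
    have hjl : j = l := by simpa [Pi.single_apply, Ne.symm hne.1, hne.2.2] using congr_fun hl j
    exact hne.1 (hil.trans hjl.symm)
  · obtain ⟨m, hmi, hmj, hmk⟩ := Fin.exists_ne_ne_ne hn i j k
    simpa [Pi.single_apply, hmi, hmj, hmk] using congr_fun hl m

lemma eq_or_eq_or_eq_of_add_add_mem (hn : 3 < n) :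
    ∀ a ∈ gens n, ∀ b ∈ gens n, ∀ c ∈ gens n, a + b + c ∈ gens n → a = b ∨ a = c ∨ b = c := by
  rintro _ (⟨i, rfl⟩ | rfl) _ (⟨j, rfl⟩ | rfl) _ (⟨k, rfl⟩ | rfl) h
  · obtain hij | hik | hjk := eq_or_eq_or_eq_of_single_add_single_add_single_mem hn h
    · exact .inl (hij ▸ rfl)
    · exact .inr (.inl (hik ▸ rfl))
    · exact .inr (.inr (hjk ▸ rfl))
  · exact .inl (eq_of_single_add_single_add_one_mem hn h ▸ rfl)
  · rw [add_right_comm] at h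
    exact .inr (.inl (eq_of_single_add_single_add_one_mem hn h ▸ rfl))
  · exact .inr (.inr rfl)
  · rw [add_comm 1, add_right_comm] at h
    exact .inr (.inr (eq_of_single_add_single_add_one_mem hn h ▸ rfl))
  · exact .inr (.inl rfl)
  · exact .inl rfl
  · exact .inl rfl

end FQ

/-- For n > 3, every 2-path u-v-w in FQ_n lies in exactly one 4-cycle,
i.e. u and w have exactly one common neighbor other than v. -/
theorem fq_two_path_unique_four_cycle (n : ℕ) (hn : 3 < n)
    (u v w : Fin n → ZMod 2) (huw : u ≠ w)
    (hu : (FQ n).Adj v u) (hw : (FQ n).Adj v w) :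
    ∃! x : Fin n → ZMod 2, x ≠ v ∧ (FQ n).Adj u x ∧ (FQ n).Adj w x := by
  rw [FQ.eq_addCayley] at *
  exact addCayley_existsUnique_commonNeighbor_ne (FQ.eq_or_eq_or_eq_of_add_add_mem hn) huw hu hw
end

section
/- For n > 3, the automorphism group of the folded hypercube FQ_n has order exactly (n+1)! · 2^n. -/
namespace FQ

section ZModTwo

variable {ι : Type*}

lemma add_self (x : ι → ZMod 2) : x + x = 0 :=
  funext fun i => CharTwo.add_self_eq_zero (x i)

lemma add_add_cancel (x y : ι → ZMod 2) : x + y + y = x := by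
  rw [add_assoc, add_self, add_zero]

lemma eq_of_add_eq_zero {x y : ι → ZMod 2} (h : x + y = 0) : x = y := by
  rw [← add_add_cancel x y, h, zero_add]

lemma induction_add_single [Finite ι] [DecidableEq ι] {P : (ι → ZMod 2) → Prop}
    (zero : P 0) (add_single : ∀ x i, P x → P (x + Pi.single i 1)) (x : ι → ZMod 2) : P x := by
  suffices ∀ y, P y → P (y + x) by simpa using this 0 zero
  induction x using Pi.single_induction with
  | zero => simp
  | add f g hf hg => exact fun y hy => add_assoc y f g ▸ hg _ (hf y hy)
  | single i c =>
    intro y hy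
    match c with
    | 0 => simpa using hy
    | 1 => exact add_single y i hy

end ZModTwo

variable {n : ℕ}

def proj (n : ℕ) : (Fin (n + 1) → ZMod 2) →+ (Fin n → ZMod 2) where
  toFun y i := y i.castSucc + y (Fin.last n)
  map_zero' := by ext; simp
  map_add' y z := by ext; simp only [Pi.add_apply]; ring

lemma proj_apply (y : Fin (n + 1) → ZMod 2) (i : Fin n) :
    proj n y i = y i.castSucc + y (Fin.last n) := rfl

lemma proj_const (c : ZMod 2) : proj n (fun _ => c) = 0 :=
  funext fun _ => CharTwo.add_self_eq_zero c

lemma proj_surjective : Function.Surjective (proj n) :=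
  fun x => ⟨Fin.snoc x 0, by ext i; simp [proj_apply]⟩

lemma eq_of_proj_eq {y z : Fin (n + 1) → ZMod 2} (h : proj n y = proj n z) {j : Fin (n + 1)}
    (hj : y j = z j) : y = z := by
  have hcast (i : Fin n) := congrFun h i
  simp only [proj_apply] at hcast
  have hlast : y (Fin.last n) = z (Fin.last n) := by
    induction j using Fin.lastCases with
    | last => exact hj
    | cast i => simpa [hj] using hcast i
  funext k
  induction k using Fin.lastCases with
  | last => exact hlast
  | cast i => simpa [hlast] using hcast i

lemma exists_notMem_of_card_le {s : Finset (Fin (n + 1))} (hs : s.card ≤ n) : ∃ j, j ∉ s := by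
  obtain ⟨j, -, hj⟩ := Finset.exists_mem_notMem_of_card_lt_card (s := s) (t := .univ)
    (by rw [Finset.card_univ, Fintype.card_fin]; omega)
  exact ⟨j, hj⟩

def gen (n : ℕ) (k : Fin (n + 1)) : Fin n → ZMod 2 := proj n (Pi.single k 1)

@[simp]
lemma gen_castSucc (i : Fin n) : gen n i.castSucc = Pi.single i 1 := by
  ext j
  by_cases h : j = i <;> simp [gen, proj_apply, h]

@[simp]
lemma gen_last : gen n (Fin.last n) = 1 := by
  ext j
  simp [gen, proj_apply]

lemma gen_ne_zero (hn : 0 < n) (k : Fin (n + 1)) : gen n k ≠ 0 := by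
  intro h
  obtain ⟨j, hj⟩ := exists_notMem_of_card_le (s := {k}) ((Finset.card_singleton k).le.trans hn)
  rw [← map_zero (proj n)] at h
  have := congrFun (eq_of_proj_eq h (j := j) (by simp_all)) k
  simp at this

lemma gen_injective (hn : 1 < n) : Function.Injective (gen n) := by
  intro a b h
  obtain ⟨j, hj⟩ := exists_notMem_of_card_le (s := {a, b}) (Finset.card_le_two.trans hn)
  have := congrFun (eq_of_proj_eq h (j := j) (by simp_all)) a
  by_contra hab
  simp [Ne.symm hab] at this

lemma gen_add_gen_eq_gen_add_gen (hn : 3 < n) {a b c d : Fin (n + 1)} (hab : a ≠ b)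
    (h : gen n a + gen n b = gen n c + gen n d) : (a = c ∧ b = d) ∨ (a = d ∧ b = c) := by
  obtain ⟨j, hj⟩ := exists_notMem_of_card_le (s := {a, b, c, d}) (Finset.card_le_four.trans hn)
  simp only [gen, ← map_add] at h
  have := eq_of_proj_eq h (j := j) (by simp_all)
  rw [Pi.single_add_single_eq_single_add_single one_ne_zero one_ne_zero] at this
  tauto

lemma adj_iff_exists_gen {x y : Fin n → ZMod 2} :
    (FQ n).Adj x y ↔ x ≠ y ∧ ∃ k, y = x + gen n k := by
  have hrel (x y : Fin n → ZMod 2) :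
      ((∃ i, y = x + Pi.single i 1) ∨ y = x + 1) ↔ ∃ k, y = x + gen n k := by
    simp [Fin.exists_fin_succ']
  have hsymm (k : Fin (n + 1)) : x = y + gen n k ↔ y = x + gen n k := by
    constructor <;> rintro rfl <;> exact (add_add_cancel _ _).symm
  simp only [FQ, SimpleGraph.fromRel_adj, hrel, hsymm, or_self]

lemma adj_iff (hn : 0 < n) {x y : Fin n → ZMod 2} : (FQ n).Adj x y ↔ ∃ k, y = x + gen n k := by
  rw [adj_iff_exists_gen, and_iff_right_iff_imp]
  rintro ⟨k, rfl⟩ h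
  exact gen_ne_zero hn k (by simpa using h)

lemma adj_add_gen (hn : 0 < n) (x : Fin n → ZMod 2) (k : Fin (n + 1)) :
    (FQ n).Adj x (x + gen n k) :=
  (adj_iff hn).2 ⟨k, rfl⟩

def addRightIso (v : Fin n → ZMod 2) : FQ n ≃g FQ n where
  toEquiv := Equiv.addRight v
  map_rel_iff' {x y} := by
    simp only [Equiv.coe_addRight, adj_iff_exists_gen, ne_eq, add_left_inj, add_right_comm x v]

def permMap (σ : Equiv.Perm (Fin (n + 1))) (x : Fin n → ZMod 2) : Fin n → ZMod 2 :=
  proj n (Fin.snoc x 0 ∘ σ.symm)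

lemma permMap_proj (σ : Equiv.Perm (Fin (n + 1))) (y : Fin (n + 1) → ZMod 2) :
    permMap σ (proj n y) = proj n (y ∘ σ.symm) := by
  have hsnoc : (Fin.snoc (proj n y) 0 : Fin (n + 1) → ZMod 2) = y + fun _ => y (Fin.last n) := by
    funext k
    induction k using Fin.lastCases with
    | last => simp [CharTwo.add_self_eq_zero]
    | cast i => simp [proj_apply]
  rw [permMap, hsnoc, Pi.add_comp, map_add, add_eq_left]
  exact proj_const _

def permAddEquiv (σ : Equiv.Perm (Fin (n + 1))) : (Fin n → ZMod 2) ≃+ (Fin n → ZMod 2) where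
  toFun := permMap σ
  invFun := permMap σ.symm
  left_inv x := by
    obtain ⟨y, rfl⟩ := proj_surjective x
    simp [permMap_proj, Function.comp_assoc]
  right_inv x := by
    obtain ⟨y, rfl⟩ := proj_surjective x
    simp [permMap_proj, Function.comp_assoc]
  map_add' x x' := by
    obtain ⟨y, rfl⟩ := proj_surjective x
    obtain ⟨y', rfl⟩ := proj_surjective x'
    simp only [← map_add, permMap_proj, Pi.add_comp]

lemma permAddEquiv_apply (σ : Equiv.Perm (Fin (n + 1))) (x : Fin n → ZMod 2) :
    permAddEquiv σ x = permMap σ x := rfl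

lemma permAddEquiv_gen (σ : Equiv.Perm (Fin (n + 1))) (k : Fin (n + 1)) :
    permAddEquiv σ (gen n k) = gen n (σ k) := by
  rw [permAddEquiv_apply, gen, permMap_proj, Pi.single_comp_equiv, Equiv.symm_symm, gen]

def permIso (σ : Equiv.Perm (Fin (n + 1))) : FQ n ≃g FQ n where
  toEquiv := (permAddEquiv σ).toEquiv
  map_rel_iff' {x y} := by
    set f := permAddEquiv σ
    change (FQ n).Adj (f x) (f y) ↔ _
    rw [adj_iff_exists_gen, adj_iff_exists_gen, f.injective.ne_iff]
    refine and_congr_right fun _ => ⟨fun ⟨k, hk⟩ => ⟨σ.symm k, ?_⟩, fun ⟨k, hk⟩ => ⟨σ k, ?_⟩⟩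
    · apply f.injective
      rw [map_add, permAddEquiv_gen, σ.apply_symm_apply, hk]
    · rw [hk, map_add, permAddEquiv_gen]

lemma commonNeighbors_add_gen_subset (hn : 3 < n) (x : Fin n → ZMod 2) {k m : Fin (n + 1)}
    (hkm : k ≠ m) :
    (FQ n).commonNeighbors (x + gen n k) (x + gen n m) ⊆ {x, x + gen n k + gen n m} := by
  intro u hu
  rw [SimpleGraph.mem_commonNeighbors, adj_iff (by omega), adj_iff (by omega)] at hu
  obtain ⟨⟨a, rfl⟩, ⟨b, hb⟩⟩ := hu
  by_cases hak : k = a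
  · exact .inl (hak ▸ add_add_cancel x _)
  by_cases hbm : m = b
  · exact .inl (hb.trans (hbm ▸ add_add_cancel x _))
  rw [add_assoc, add_assoc] at hb
  obtain ⟨hkm', -⟩ | ⟨-, rfl⟩ := gen_add_gen_eq_gen_add_gen hn hak (add_left_cancel hb)
  · exact absurd hkm' hkm
  · exact .inr rfl

lemma iso_apply_add_gen_add_gen (hn : 3 < n) (φ : FQ n ≃g FQ n) {x : Fin n → ZMod 2}
    {k m : Fin (n + 1)} (hx : φ x = x) (hk : φ (x + gen n k) = x + gen n k)
    (hm : φ (x + gen n m) = x + gen n m) :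
    φ (x + gen n k + gen n m) = x + gen n k + gen n m := by
  obtain rfl | hkm := eq_or_ne k m
  · rwa [add_add_cancel]
  set z := x + gen n k + gen n m with hz_def
  have hz : z ∈ (FQ n).commonNeighbors (x + gen n k) (x + gen n m) :=
    ⟨adj_add_gen (by omega) _ m, by rw [hz_def, add_right_comm]; exact adj_add_gen (by omega) _ k⟩
  have hφz : φ z ∈ (FQ n).commonNeighbors (x + gen n k) (x + gen n m) := by
    rwa [SimpleGraph.mem_commonNeighbors, ← hk, ← hm, φ.map_adj_iff, φ.map_adj_iff]
  rcases commonNeighbors_add_gen_subset hn x hkm hφz with h | h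
  · have hzx : z = x := φ.injective (h.trans hx.symm)
    rw [hz_def, add_assoc, add_eq_left] at hzx
    exact absurd (gen_injective (by omega) (eq_of_add_eq_zero hzx)) hkm
  · exact h

lemma iso_apply_eq_self (hn : 3 < n) (φ : FQ n ≃g FQ n) (h0 : φ 0 = 0)
    (hgen : ∀ k, φ (gen n k) = gen n k) (x : Fin n → ZMod 2) : φ x = x := by
  let P (x : Fin n → ZMod 2) := φ x = x ∧ ∀ k, φ (x + gen n k) = x + gen n k
  suffices P x from this.1
  refine induction_add_single ⟨h0, by simpa using hgen⟩ (fun x i hx => ?_) x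
  rw [← gen_castSucc]
  exact ⟨hx.2 _, fun m => iso_apply_add_gen_add_gen hn φ hx.1 (hx.2 _) (hx.2 m)⟩

lemma iso_ext (hn : 3 < n) {φ ψ : FQ n ≃g FQ n} (h0 : φ 0 = ψ 0)
    (hgen : ∀ k, φ (gen n k) = ψ (gen n k)) : φ = ψ := by
  have key := iso_apply_eq_self hn (φ.trans ψ.symm) (by simp [h0]) (by simp [hgen])
  refine RelIso.ext fun x => ?_
  simpa [ψ.symm_apply_eq] using key x

lemma exists_perm_apply_gen (hn : 1 < n) (φ : FQ n ≃g FQ n) :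
    ∃ σ : Equiv.Perm (Fin (n + 1)), ∀ k, φ (gen n k) = φ 0 + gen n (σ k) := by
  have hnbr (k : Fin (n + 1)) : ∃ l, φ (gen n k) = φ 0 + gen n l := by
    rw [← adj_iff (by omega), φ.map_adj_iff]
    simpa using adj_add_gen (by omega) 0 k
  choose f hf using hnbr
  have hf_inj : Function.Injective f := fun k l hkl =>
    gen_injective hn (φ.injective ((hf k).trans (hkl ▸ (hf l).symm)))
  exact ⟨.ofBijective f (Finite.injective_iff_bijective.1 hf_inj), hf⟩

def affineIso (v : Fin n → ZMod 2) (σ : Equiv.Perm (Fin (n + 1))) : FQ n ≃g FQ n :=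
  (permIso σ).trans (addRightIso v)

lemma affineIso_apply (v : Fin n → ZMod 2) (σ : Equiv.Perm (Fin (n + 1))) (x : Fin n → ZMod 2) :
    affineIso v σ x = permAddEquiv σ x + v := rfl

lemma affineIso_injective (hn : 1 < n) :
    Function.Injective fun p : (Fin n → ZMod 2) × Equiv.Perm (Fin (n + 1)) =>
      affineIso p.1 p.2 := by
  rintro ⟨v, σ⟩ ⟨w, τ⟩ h
  have happ (x) : permAddEquiv σ x + v = permAddEquiv τ x + w := by
    simpa only [affineIso_apply] using RelIso.ext_iff.1 h x
  have hvw : v = w := by simpa using happ 0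
  subst hvw
  refine Prod.ext rfl (Equiv.ext fun k => gen_injective hn ?_)
  simpa [permAddEquiv_gen] using happ (gen n k)

lemma affineIso_surjective (hn : 3 < n) :
    Function.Surjective fun p : (Fin n → ZMod 2) × Equiv.Perm (Fin (n + 1)) =>
      affineIso p.1 p.2 := by
  intro φ
  obtain ⟨σ, hσ⟩ := exists_perm_apply_gen (by omega) φ
  refine ⟨(φ 0, σ), iso_ext hn (by simp [affineIso_apply]) fun k => ?_⟩
  simp [affineIso_apply, permAddEquiv_gen, hσ, add_comm]

end FQ

theorem fq_aut_card (n : ℕ) (hn : 3 < n) :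
    Nat.card (FQ n ≃g FQ n) = (n + 1).factorial * 2 ^ n := by
  rw [← Nat.card_eq_of_bijective _
      ⟨FQ.affineIso_injective (by omega), FQ.affineIso_surjective hn⟩,
    Nat.card_prod, Nat.card_fun, Nat.card_perm, Nat.card_zmod, Nat.card_fin, Nat.card_fin, mul_comm]
end

section
/- For n ≥ 2, the folded hypercube FQ_n is a symmetric graph: for any two ordered pairs (u,v) and (x,y) of adjacent vertices there is an automorphism α with α(u) = x and α(v) = y. -/
namespace FQAux

variable {n : ℕ}

/-- The set of "edge directions". -/
def P (d : Fin n → ZMod 2) : Prop := (∃ i, d = Pi.single i 1) ∨ d = 1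

lemma pi_add_self (a : Fin n → ZMod 2) : a + a = 0 := by
  funext i
  have : ∀ z : ZMod 2, z + z = 0 := by decide
  exact this (a i)

lemma eq_add_iff {u v d : Fin n → ZMod 2} : v = u + d ↔ u + v = d := by
  constructor
  · rintro rfl; rw [← add_assoc, pi_add_self, zero_add]
  · rintro rfl; rw [← add_assoc, pi_add_self, zero_add]

lemma adj_iff {u v : Fin n → ZMod 2} :
    (FQ n).Adj u v ↔ u ≠ v ∧ P (u + v) := by
  rw [FQ, SimpleGraph.fromRel_adj]
  constructor
  · rintro ⟨hne, h | h⟩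
    · refine ⟨hne, ?_⟩
      rcases h with ⟨i, hi⟩ | h
      · exact Or.inl ⟨i, eq_add_iff.mp hi⟩
      · exact Or.inr (eq_add_iff.mp h)
    · refine ⟨hne, ?_⟩
      rw [add_comm]
      rcases h with ⟨i, hi⟩ | h
      · exact Or.inl ⟨i, eq_add_iff.mp hi⟩
      · exact Or.inr (eq_add_iff.mp h)
  · rintro ⟨hne, h⟩
    refine ⟨hne, Or.inl ?_⟩
    rcases h with ⟨i, hi⟩ | h
    · exact Or.inl ⟨i, eq_add_iff.mpr hi⟩
    · exact Or.inr (eq_add_iff.mpr h)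

/-- Build an automorphism of `FQ n` from an equivalence compatible with `P`. -/
def isoOfEquiv (e : (Fin n → ZMod 2) ≃ (Fin n → ZMod 2))
    (h : ∀ a b, P (e a + e b) ↔ P (a + b)) : FQ n ≃g FQ n where
  toEquiv := e
  map_rel_iff' := by
    intro a b
    rw [adj_iff, adj_iff, h]
    simp [e.injective.ne_iff]

/-- Automorphisms from additive involutions preserving `P`. -/
def isoOfInvol (f : (Fin n → ZMod 2) → (Fin n → ZMod 2))
    (hf2 : ∀ z, f (f z) = z) (hadd : ∀ a b, f (a + b) = f a + f b)
    (hP : ∀ z, P z → P (f z)) : FQ n ≃g FQ n :=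
  isoOfEquiv ⟨f, f, hf2, hf2⟩ (by
    intro a b
    dsimp
    rw [← hadd]
    constructor
    · intro h
      have := hP _ h
      rwa [hf2] at this
    · exact hP _)

/-- Translation automorphism. -/
def transIso (c : Fin n → ZMod 2) : FQ n ≃g FQ n :=
  isoOfEquiv (Equiv.addRight c) (by
    intro a b
    have : a + c + (b + c) = a + b := by
      rw [add_add_add_comm, pi_add_self, add_zero]
    simp only [Equiv.coe_addRight, this])

lemma single_comp_swap (i j k : Fin n) :
    (Pi.single k (1 : ZMod 2)) ∘ (Equiv.swap i j) = Pi.single ((Equiv.swap i j) k) 1 := by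
  funext m
  simp only [Function.comp_apply, Pi.single_apply]
  congr 1
  rw [eq_iff_iff]
  constructor
  · intro h
    rw [← h, Equiv.swap_apply_self]
  · intro h
    rw [h, Equiv.swap_apply_self]

/-- Coordinate-swap automorphism. -/
def swapIso (i j : Fin n) : FQ n ≃g FQ n :=
  isoOfInvol (fun z => z ∘ (Equiv.swap i j))
    (fun z => by
      funext k
      simp [Equiv.swap_apply_self])
    (fun a b => rfl)
    (by
      rintro z (⟨k, rfl⟩ | rfl)
      · exact Or.inl ⟨Equiv.swap i j k, single_comp_swap i j k⟩
      · exact Or.inr rfl)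

/-- The direction vector used in `psi`. -/
def w (i : Fin n) : Fin n → ZMod 2 := 1 + Pi.single i 1

lemma w_apply_self (i : Fin n) : w i i = 0 := by
  simp [w]
  decide

/-- The "fold" map exchanging the `i`-th coordinate direction with the all-ones
direction. -/
def psi (i : Fin n) (z : Fin n → ZMod 2) : Fin n → ZMod 2 := z + z i • w i

lemma psi_apply_self (i : Fin n) (z : Fin n → ZMod 2) : psi i z i = z i := by
  simp [psi, w_apply_self]

lemma psi_invol (i : Fin n) (z : Fin n → ZMod 2) : psi i (psi i z) = z := by
  rw [psi, psi_apply_self]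
  rw [psi, add_assoc, ← add_smul]
  have : z i + z i = 0 := by
    have : ∀ t : ZMod 2, t + t = 0 := by decide
    exact this _
  rw [this, zero_smul, add_zero]

lemma psi_add (i : Fin n) (a b : Fin n → ZMod 2) :
    psi i (a + b) = psi i a + psi i b := by
  simp only [psi, Pi.add_apply, add_smul]
  abel

lemma psi_single_self (i : Fin n) : psi i (Pi.single i 1) = 1 := by
  rw [psi, Pi.single_eq_same, one_smul, w]
  rw [add_comm, add_assoc, pi_add_self, add_zero]

lemma psi_one (i : Fin n) : psi i 1 = Pi.single i 1 := by
  rw [psi, Pi.one_apply, one_smul, w, ← add_assoc, pi_add_self, zero_add]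

lemma psi_P (i : Fin n) : ∀ z, P z → P (psi i z) := by
  rintro z (⟨k, rfl⟩ | rfl)
  · by_cases hk : k = i
    · subst hk
      exact Or.inr (psi_single_self k)
    · have : psi i (Pi.single k 1) = Pi.single k 1 := by
        rw [psi, Pi.single_eq_of_ne (Ne.symm hk), zero_smul, add_zero]
      rw [this]
      exact Or.inl ⟨k, rfl⟩
  · rw [psi_one]
    exact Or.inl ⟨i, rfl⟩

/-- Fold automorphism. -/
def psiIso (i : Fin n) : FQ n ≃g FQ n :=
  isoOfInvol (psi i) (psi_invol i) (psi_add i) (psi_P i)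

lemma psi_zero (i : Fin n) : psi i 0 = 0 := by
  simp [psi]

lemma exists_iso (d e : Fin n → ZMod 2) (hd : P d) (he : P e) :
    ∃ α : FQ n ≃g FQ n, α 0 = 0 ∧ α d = e := by
  rcases hd with ⟨i, rfl⟩ | rfl
  · rcases he with ⟨j, rfl⟩ | rfl
    · refine ⟨swapIso i j, rfl, ?_⟩
      show Pi.single i (1 : ZMod 2) ∘ Equiv.swap i j = Pi.single j 1
      rw [single_comp_swap, Equiv.swap_apply_left]
    · exact ⟨psiIso i, psi_zero i, psi_single_self i⟩
  · rcases he with ⟨j, rfl⟩ | rfl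
    · exact ⟨psiIso j, psi_zero j, psi_one j⟩
    · exact ⟨isoOfInvol id (fun _ => rfl) (fun _ _ => rfl) (fun _ h => h), rfl, rfl⟩

end FQAux

open FQAux in
theorem fq_symmetric (n : ℕ) (hn : 2 ≤ n)
    (u v x y : Fin n → ZMod 2) (huv : (FQ n).Adj u v) (hxy : (FQ n).Adj x y) :
    ∃ φ : FQ n ≃g FQ n, φ u = x ∧ φ v = y := by
  rw [adj_iff] at huv hxy
  obtain ⟨-, hd⟩ := huv
  obtain ⟨-, he⟩ := hxy
  obtain ⟨α, hα0, hαd⟩ := exists_iso (u + v) (x + y) hd he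
  refine ⟨(transIso u).trans (α.trans (transIso x)), ?_, ?_⟩
  · show α (u + u) + x = x
    rw [pi_add_self, hα0, zero_add]
  · show α (v + u) + x = y
    rw [add_comm v u, hαd, add_comm x y, add_assoc, pi_add_self, add_zero]
end

section
/- For n ≥ 2, the folded hypercube FQ_n is edge-transitive: for any two edges {u,v} and {x,y} there is an automorphism mapping {u,v} to {x,y}. -/
namespace FQaux

variable {n : ℕ}

abbrev V (n : ℕ) := Fin n → ZMod 2

lemma add_self (c : V n) : c + c = 0 := by
  funext j
  have : ∀ a : ZMod 2, a + a = 0 := by decide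
  exact this (c j)

lemma eq_comm' {u v c : V n} (h : u = v + c) : v = u + c := by
  rw [h, add_assoc, add_self, add_zero]

lemma adj_iff {u v : V n} :
    (FQ n).Adj u v ↔ u ≠ v ∧ ((∃ i, v = u + Pi.single i 1) ∨ v = u + 1) := by
  simp only [FQ, SimpleGraph.fromRel_adj]
  constructor
  · rintro ⟨hne, h | (⟨i, hi⟩ | h1)⟩
    · exact ⟨hne, h⟩
    · exact ⟨hne, Or.inl ⟨i, eq_comm' hi⟩⟩
    · exact ⟨hne, Or.inr (eq_comm' h1)⟩
  · rintro ⟨hne, h⟩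
    exact ⟨hne, Or.inl h⟩

lemma shift_eq (a : V n) {x y s : V n} : y + a = (x + a) + s ↔ y = x + s := by
  rw [add_right_comm]
  exact add_left_inj a

/-- Translation automorphism. -/
def trIso (a : V n) : FQ n ≃g FQ n where
  toEquiv := Equiv.addRight a
  map_rel_iff' := by
    intro x y
    simp only [Equiv.coe_addRight, adj_iff, ne_eq, add_left_inj, shift_eq]

@[simp] lemma trIso_apply (a x : V n) : trIso a x = x + a := rfl

lemma single_comp (σ : Equiv.Perm (Fin n)) (i : Fin n) :
    (Pi.single i (1 : ZMod 2)) ∘ σ = Pi.single (σ.symm i) 1 := by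
  funext j
  simp only [Function.comp_apply, Pi.single_apply]
  by_cases h : σ j = i
  · simp [h, (Equiv.symm_apply_eq σ).mpr h.symm]
  · have : j ≠ σ.symm i := fun hj => h (by rw [hj]; simp)
    simp [h, this]

lemma comp_add (x y : V n) (σ : Equiv.Perm (Fin n)) :
    (x + y) ∘ σ = x ∘ σ + y ∘ σ := rfl

lemma comp_one (σ : Equiv.Perm (Fin n)) : ((1 : V n)) ∘ σ = 1 := rfl

lemma perm_pres (σ : Equiv.Perm (Fin n)) {x y : V n} (h : (FQ n).Adj x y) :
    (FQ n).Adj (x ∘ σ) (y ∘ σ) := by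
  rcases adj_iff.mp h with ⟨hne, hcase⟩
  refine adj_iff.mpr ⟨?_, ?_⟩
  · intro he
    apply hne
    funext j
    have := congrFun he (σ.symm j)
    simpa using this
  · rcases hcase with ⟨i, hi⟩ | h1
    · exact Or.inl ⟨σ.symm i, by rw [hi, comp_add, single_comp]⟩
    · exact Or.inr (by rw [h1, comp_add, comp_one])

/-- Coordinate-permutation automorphism. -/
def permIso (σ : Equiv.Perm (Fin n)) : FQ n ≃g FQ n where
  toEquiv := Equiv.arrowCongr σ.symm (Equiv.refl (ZMod 2))
  map_rel_iff' := by
    intro x y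
    show (FQ n).Adj (Equiv.arrowCongr σ.symm (Equiv.refl (ZMod 2)) x) _ ↔ _
    have key : ∀ z : V n, Equiv.arrowCongr σ.symm (Equiv.refl (ZMod 2)) z = z ∘ σ := by
      intro z; funext j; simp [Equiv.arrowCongr]
    rw [key, key]
    constructor
    · intro h
      have := perm_pres σ.symm h
      have hx : (x ∘ σ) ∘ σ.symm = x := by funext j; simp
      have hy : (y ∘ σ) ∘ σ.symm = y := by funext j; simp
      rwa [hx, hy] at this
    · exact perm_pres σ

@[simp] lemma permIso_apply (σ : Equiv.Perm (Fin n)) (x : V n) :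
    permIso σ x = x ∘ σ := by
  funext j; simp [permIso, Equiv.arrowCongr]

/-- The twist vector. -/
def cvec (i : Fin n) : V n := 1 + Pi.single i 1

lemma cvec_apply_self (i : Fin n) : cvec i i = 0 := by
  simp only [cvec, Pi.add_apply, Pi.one_apply, Pi.single_eq_same]
  decide

/-- The "flip" map exchanging the diagonal edges with the `i`-th coordinate edges. -/
def psi (i : Fin n) (x : V n) : V n := x + (x i) • cvec i

lemma psi_apply_self (i : Fin n) (x : V n) : psi i x i = x i := by
  simp [psi, cvec_apply_self]

lemma psi_invol (i : Fin n) : Function.Involutive (psi i) := by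
  intro x
  show psi i x + (psi i x i) • cvec i = x
  rw [psi_apply_self, psi, add_assoc, add_self, add_zero]

lemma psi_single_ne (i j : Fin n) (hji : j ≠ i) (x : V n) :
    psi i (x + Pi.single j 1) = psi i x + Pi.single j 1 := by
  have hx : ((x + Pi.single j 1 : V n)) i = x i := by
    simp [Pi.single_apply, hji.symm]
  show (x + Pi.single j 1) + (((x + Pi.single j 1 : V n)) i) • cvec i = _
  rw [hx]
  show x + Pi.single j 1 + (x i) • cvec i = x + (x i) • cvec i + Pi.single j 1
  abel

lemma psi_single_eq (i : Fin n) (x : V n) :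
    psi i (x + Pi.single i 1) = psi i x + 1 := by
  have hx : ((x + Pi.single i 1 : V n)) i = x i + 1 := by simp
  show (x + Pi.single i 1) + (((x + Pi.single i 1 : V n)) i) • cvec i = x + (x i) • cvec i + 1
  rw [hx, add_smul, one_smul]
  rw [show cvec i = 1 + Pi.single i 1 from rfl]
  abel_nf
  simp [two_smul, two_nsmul, two_zsmul, add_self]

lemma psi_one (i : Fin n) (x : V n) :
    psi i (x + 1) = psi i x + Pi.single i 1 := by
  have hx : ((x + 1 : V n)) i = x i + 1 := rfl
  show (x + 1) + (((x + 1 : V n)) i) • cvec i = x + (x i) • cvec i + Pi.single i 1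
  rw [hx, add_smul, one_smul]
  rw [show cvec i = 1 + Pi.single i 1 from rfl]
  abel_nf
  simp [two_smul, two_nsmul, two_zsmul, add_self]

lemma psi_pres (i : Fin n) {x y : V n} (h : (FQ n).Adj x y) :
    (FQ n).Adj (psi i x) (psi i y) := by
  rcases adj_iff.mp h with ⟨hne, hcase⟩
  refine adj_iff.mpr ⟨fun he => hne ((psi_invol i).injective he), ?_⟩
  rcases hcase with ⟨j, hj⟩ | h1
  · by_cases hji : j = i
    · subst hji
      exact Or.inr (by rw [hj, psi_single_eq j])
    · exact Or.inl ⟨j, by rw [hj, psi_single_ne i j hji]⟩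
  · exact Or.inl ⟨i, by rw [h1, psi_one]⟩

/-- The flip automorphism. -/
def psiIso (i : Fin n) : FQ n ≃g FQ n where
  toEquiv := (psi_invol i).toPerm
  map_rel_iff' := by
    intro x y
    show (FQ n).Adj (psi i x) (psi i y) ↔ (FQ n).Adj x y
    constructor
    · intro h
      have := psi_pres i h
      rwa [psi_invol i x, psi_invol i y] at this
    · exact psi_pres i

@[simp] lemma psiIso_apply (i : Fin n) (x : V n) : psiIso i x = psi i x := rfl

/-- Every edge can be mapped to the canonical edge `(0, e₀)`. -/
lemma canon (hn : 0 < n) {u v : V n} (h : (FQ n).Adj u v) :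
    ∃ φ : FQ n ≃g FQ n, φ u = 0 ∧ φ v = Pi.single (⟨0, hn⟩ : Fin n) 1 := by
  set i0 : Fin n := ⟨0, hn⟩
  rcases adj_iff.mp h with ⟨hne, (⟨i, hi⟩ | h1)⟩
  · refine ⟨(trIso u).trans (permIso (Equiv.swap i i0)), ?_, ?_⟩
    · show permIso (Equiv.swap i i0) (trIso u u) = 0
      rw [trIso_apply, add_self, permIso_apply]
      rfl
    · show permIso (Equiv.swap i i0) (trIso u v) = _
      have hvu : v + u = Pi.single i 1 := by
        rw [hi, add_right_comm, add_self, zero_add]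
      rw [trIso_apply, hvu, permIso_apply, single_comp]
      simp
  · refine ⟨(trIso u).trans (psiIso i0), ?_, ?_⟩
    · show psiIso i0 (trIso u u) = 0
      rw [trIso_apply, add_self, psiIso_apply]
      show (0 : V n) + ((0 : V n) i0) • cvec i0 = 0
      simp
    · show psiIso i0 (trIso u v) = _
      have hvu : v + u = 1 := by
        rw [h1, add_right_comm, add_self, zero_add]
      rw [trIso_apply, hvu, psiIso_apply]
      show (1 : V n) + ((1 : V n) i0) • cvec i0 = Pi.single i0 1
      rw [show ((1 : V n) i0) = 1 from rfl, one_smul,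
        show cvec i0 = 1 + Pi.single i0 1 from rfl, ← add_assoc, add_self, zero_add]

end FQaux

theorem fq_edge_transitive (n : ℕ) (hn : 2 ≤ n)
    (u v x y : Fin n → ZMod 2) (huv : (FQ n).Adj u v) (hxy : (FQ n).Adj x y) :
    ∃ φ : FQ n ≃g FQ n, (φ u = x ∧ φ v = y) ∨ (φ u = y ∧ φ v = x) := by
  have hn0 : 0 < n := by omega
  obtain ⟨φ1, h1u, h1v⟩ := FQaux.canon hn0 huv
  obtain ⟨φ2, h2x, h2y⟩ := FQaux.canon hn0 hxy
  refine ⟨φ1.trans φ2.symm, Or.inl ⟨?_, ?_⟩⟩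
  · show φ2.symm (φ1 u) = x
    rw [h1u, ← h2x]
    exact φ2.symm_apply_apply x
  · show φ2.symm (φ1 v) = y
    rw [h1v, ← h2y]
    exact φ2.symm_apply_apply y
end

section
/- For n ≥ 2, the vertex connectivity of the folded hypercube FQ_n equals n+1. -/
open Function

namespace SimpleGraph

variable {V : Type*} {G G' : SimpleGraph V}

lemma Connected.induce_mono (h : G ≤ G') {s : Set V} (hs : (G.induce s).Connected) :
    (G'.induce s).Connected :=
  hs.mono (comap_monotone _ h)

lemma connected_induce_union_of_forall_exists_adj {s t : Set V} (ht : (G.induce t).Connected)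
    (h : ∀ u ∈ s, ∃ v ∈ t, G.Adj u v) : (G.induce (s ∪ t)).Connected := by
  obtain ⟨⟨w, hw⟩⟩ := ht.nonempty
  refine G.induce_connected_of_patches w (Or.inr hw) fun {u} hu => ?_
  rcases hu with hu | hu
  · obtain ⟨v, hv, huv⟩ := h u hu
    have hconn : (G.induce ({u} ∪ t)).Connected :=
      connected_induce_union (by simp) ht.preconnected rfl hv huv
    exact ⟨{u} ∪ t, Set.union_subset_union_left _ (Set.singleton_subset_iff.2 hu),
      Or.inr hw, Or.inl rfl, hconn.preconnected _ _⟩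
  · exact ⟨t, Set.subset_union_right, hw, hu, ht.preconnected _ _⟩

lemma not_connected_induce_compl_neighborSet_or_subsingleton (G : SimpleGraph V) (v : V) :
    ¬ (G.induce (G.neighborSet v)ᶜ).Connected ∨ (G.neighborSet v)ᶜ.Subsingleton := by
  rw [or_iff_not_imp_right, Set.not_subsingleton_iff]
  intro hnt hconn
  obtain ⟨w, hw, hwv⟩ := hnt.exists_ne v
  have hv : v ∈ (G.neighborSet v)ᶜ := G.irrefl
  obtain ⟨p⟩ := hconn.preconnected ⟨v, hv⟩ ⟨w, hw⟩
  cases p with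
  | nil => exact hwv rfl
  | @cons _ u _ h _ => exact u.2 h

lemma exists_adj_mem_sdiff_of_ncard_inter_le_one [Finite V] {A T : Set V}
    (hA : (A ∩ T).ncard ≤ 1) {u v w : V} (hvw : v ≠ w) (hv : v ∈ T) (hw : w ∈ T)
    (huv : G.Adj u v) (huw : G.Adj u w) : ∃ x ∈ T \ A, G.Adj u x := by
  by_contra! h
  have hmemA (x : V) (hx : x ∈ T) (hux : G.Adj u x) : x ∈ A ∩ T :=
    ⟨by_contra fun hxA => h x ⟨hx, hxA⟩ hux, hx⟩
  exact hvw ((Set.ncard_le_one_iff (Set.toFinite _)).1 hA (hmemA v hv huv) (hmemA w hw huw))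

end SimpleGraph

lemma Set.exists_notMem_and_map_notMem {α β : Type*} [Finite α] [Finite β] {f : α → β}
    (hf : f.Injective) {A C : Set α} {B C' : Set β} (hC : Set.MapsTo f C C')
    (h : (A ∩ C).ncard + (B ∩ C').ncard < C.ncard) : ∃ u ∈ C, u ∉ A ∧ f u ∉ B := by
  by_contra! hbad
  have hcover : C ⊆ (A ∩ C) ∪ (C ∩ f ⁻¹' B) := fun u hu =>
    (em (u ∈ A)).elim (fun huA => Or.inl ⟨huA, hu⟩) fun huA => Or.inr ⟨hu, hbad u hu huA⟩
  have himage : (C ∩ f ⁻¹' B).ncard ≤ (B ∩ C').ncard := by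
    rw [← Set.ncard_image_of_injective _ hf]
    exact Set.ncard_le_ncard fun _ ⟨u, ⟨hu, huB⟩, hfu⟩ => hfu ▸ ⟨huB, hC hu⟩
  have := (Set.ncard_le_ncard hcover).trans (Set.ncard_union_le _ _)
  omega

section Hypercube

def hypercube (ι : Type*) [DecidableEq ι] : SimpleGraph (ι → ZMod 2) :=
  SimpleGraph.fromRel fun x y => ∃ i, y = x + Pi.single i 1

variable {ι : Type*}

def subcube (S : Finset ι) (z : ι → ZMod 2) : Set (ι → ZMod 2) :=
  {x | ∀ i ∉ S, x i = z i}

lemma subcube_empty (z : ι → ZMod 2) : subcube ∅ z = {z} := by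
  ext x
  simp [subcube, funext_iff]

lemma subcube_univ [Fintype ι] (z : ι → ZMod 2) : subcube Finset.univ z = Set.univ :=
  Set.eq_univ_of_forall fun _ i hi => absurd (Finset.mem_univ i) hi

variable [DecidableEq ι]

lemma hypercube_adj_add_single (x : ι → ZMod 2) (i : ι) :
    (hypercube ι).Adj x (x + Pi.single i 1) := by
  refine ⟨fun h => ?_, Or.inl ⟨i, rfl⟩⟩
  simpa using congrFun (left_eq_add.1 h) i

variable {S : Finset ι} {z x : ι → ZMod 2} {i : ι}

lemma mem_subcube_update (hi : i ∉ S) {b : ZMod 2} :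
    x ∈ subcube S (update z i b) ↔ x ∈ subcube (insert i S) z ∧ x i = b := by
  simp only [subcube, Set.mem_ofPred_eq, Finset.mem_insert, not_or]
  constructor
  · intro h
    exact ⟨fun j ⟨hji, hj⟩ => by simpa [hji] using h j hj, by simpa using h i hi⟩
  · rintro ⟨h, hxi⟩ j hj
    by_cases hji : j = i
    · subst hji
      simpa using hxi
    · simpa [hji] using h j ⟨hji, hj⟩

lemma subcube_insert (hi : i ∉ S) (z : ι → ZMod 2) (b : ZMod 2) :
    subcube (insert i S) z = subcube S (update z i b) ∪ subcube S (update z i (b + 1)) := by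
  ext x
  simp only [Set.mem_union, mem_subcube_update hi, ← and_or_left, iff_self_and]
  intro
  generalize x i = a
  revert a b
  decide

lemma disjoint_subcube_update (hi : i ∉ S) (z : ι → ZMod 2) (b : ZMod 2) :
    Disjoint (subcube S (update z i b)) (subcube S (update z i (b + 1))) := by
  refine Set.disjoint_left.2 fun x hx hx' => ?_
  rw [mem_subcube_update hi] at hx hx'
  simpa [hx.2] using hx'.2

lemma ncard_inter_subcube_update_add [Finite ι] (hi : i ∉ S) (A : Set (ι → ZMod 2))
    (z : ι → ZMod 2) (b : ZMod 2) :
    (A ∩ subcube S (update z i b)).ncard + (A ∩ subcube S (update z i (b + 1))).ncard =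
      (A ∩ subcube (insert i S) z).ncard := by
  rw [subcube_insert hi z b, Set.inter_union_distrib_left, Set.ncard_union_eq
    ((disjoint_subcube_update hi z b).mono Set.inter_subset_right Set.inter_subset_right)]

lemma add_single_mem_subcube_update (hi : i ∉ S) {b : ZMod 2}
    (hx : x ∈ subcube S (update z i b)) :
    x + Pi.single i 1 ∈ subcube S (update z i (b + 1)) := by
  rw [mem_subcube_update hi] at hx ⊢
  refine ⟨fun j hj => ?_, by simp [hx.2]⟩
  by_cases hji : j = i
  · exact absurd (hji ▸ Finset.mem_insert_self i S) hj
  · simpa [hji] using hx.1 j hj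

lemma ncard_subcube [Finite ι] (S : Finset ι) (z : ι → ZMod 2) :
    (subcube S z).ncard = 2 ^ S.card := by
  induction S using Finset.induction_on generalizing z with
  | empty => simp [subcube_empty]
  | insert i S hi ih =>
    rw [subcube_insert hi z 0, Set.ncard_union_eq (disjoint_subcube_update hi z 0), ih, ih,
      Finset.card_insert_of_notMem hi, pow_succ, mul_two]

lemma hypercube_connected_induce_subcube_diff [Finite ι] (S : Finset ι) (z : ι → ZMod 2)
    (A : Set (ι → ZMod 2)) (hA : (A ∩ subcube S z).ncard < max S.card 1) :
    ((hypercube ι).induce (subcube S z \ A)).Connected := by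
  induction S using Finset.induction_on generalizing z with
  | empty =>
    have hz : z ∉ A := fun hz => by simp [subcube_empty, hz] at hA
    rw [subcube_empty, (Set.disjoint_singleton_left.2 hz).sdiff_eq_left,
      SimpleGraph.induce_singleton_eq_top]
    exact SimpleGraph.connected_top
  | insert i S hi ih =>
    set C : ZMod 2 → Set (ι → ZMod 2) := fun b => subcube S (update z i b)
    have hsplit (b : ZMod 2) : subcube (insert i S) z \ A = (C b \ A) ∪ (C (b + 1) \ A) := by
      rw [subcube_insert hi z b, Set.union_sdiff_distrib]
    have hsum (b : ZMod 2) :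
        (A ∩ C b).ncard + (A ∩ C (b + 1)).ncard = (A ∩ subcube (insert i S) z).ncard :=
      ncard_inter_subcube_update_add hi A z b
    rw [Finset.card_insert_of_notMem hi, max_eq_left (Nat.le_add_left 1 _)] at hA
    by_cases hlight : ∀ b, (A ∩ C b).ncard < max S.card 1
    · have hcount : (A ∩ C 0).ncard + (A ∩ C (0 + 1)).ncard < (C 0).ncard := by
        have := Nat.lt_two_pow_self (n := S.card)
        have := hsum 0
        rw [ncard_subcube]
        omega
      obtain ⟨w, hw, hwA, hwA'⟩ := Set.exists_notMem_and_map_notMem (add_left_injective _)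
        (fun x hx => add_single_mem_subcube_update hi hx) hcount
      rw [hsplit 0]
      exact SimpleGraph.connected_induce_union (ih _ (hlight 0)).preconnected
        (ih _ (hlight 1)).preconnected ⟨hw, hwA⟩ ⟨add_single_mem_subcube_update hi hw, hwA'⟩
        (hypercube_adj_add_single w i)
    · push Not at hlight
      obtain ⟨b, hb⟩ := hlight
      have hempty : (A ∩ C (b + 1)).ncard = 0 := by
        have := hsum b
        omega
      rw [hsplit b]
      refine SimpleGraph.connected_induce_union_of_forall_exists_adj
        (ih _ (hempty.trans_lt (lt_max_of_lt_right one_pos))) fun x ⟨hx, _⟩ => ?_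
      have hx' := add_single_mem_subcube_update hi hx
      have hx'A : x + Pi.single i 1 ∉ A := fun hxA =>
        ((Set.ncard_eq_zero (Set.toFinite _)).1 hempty).subset ⟨hxA, hx'⟩
      exact ⟨_, ⟨hx', hx'A⟩, hypercube_adj_add_single x i⟩

end Hypercube

section FoldedHypercube

open Finset

variable {n : ℕ}

lemma FQ_adj_iff {x y : Fin n → ZMod 2} :
    (FQ n).Adj x y ↔ x ≠ y ∧ ((∃ i, y = x + Pi.single i 1) ∨ y = x + 1) := by
  have hswap (d : Fin n → ZMod 2) : x = y + d ↔ y = x + d := by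
    rw [← sub_eq_iff_eq_add, ZModModule.sub_eq_add, eq_comm]
  simp only [FQ, SimpleGraph.fromRel_adj, hswap, or_self]

lemma hypercube_le_FQ : hypercube (Fin n) ≤ FQ n :=
  fun _ _ ⟨hne, h⟩ => ⟨hne, h.imp Or.inl Or.inl⟩

lemma FQ_adj_add_one (hn : 0 < n) (x : Fin n → ZMod 2) : (FQ n).Adj x (x + 1) := by
  refine ⟨fun h => ?_, Or.inl (Or.inr rfl)⟩
  simpa using congrFun (left_eq_add.1 h) ⟨0, hn⟩

lemma FQ_two_eq_top : FQ 2 = ⊤ := by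
  ext x y
  simp only [FQ, SimpleGraph.fromRel_adj, SimpleGraph.top_adj]
  revert x y
  decide

lemma FQ_neighborSet_zero (hn : 0 < n) :
    (FQ n).neighborSet 0 = insert 1 (Set.range fun i => Pi.single i 1) := by
  have : NeZero n := ⟨hn.ne'⟩
  ext y
  simp only [SimpleGraph.mem_neighborSet, FQ_adj_iff, zero_add, Set.mem_insert_iff,
    Set.mem_range, eq_comm (b := y)]
  constructor
  · exact fun h => h.2.symm
  · rintro (rfl | ⟨i, rfl⟩)
    · exact ⟨zero_ne_one, Or.inr rfl⟩
    · exact ⟨(Pi.single_ne_zero_iff.2 one_ne_zero).symm, Or.inl ⟨i, rfl⟩⟩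

lemma single_ne_one (hn : 2 ≤ n) (i : Fin n) : (Pi.single i 1 : Fin n → ZMod 2) ≠ 1 := by
  obtain ⟨j, hji⟩ := Fintype.exists_ne_of_one_lt_card (by simp; omega) i
  exact fun h => by simpa [hji] using congrFun h j

lemma ncard_FQ_neighborSet_zero (hn : 2 ≤ n) : ((FQ n).neighborSet 0).ncard = n + 1 := by
  have hone : (1 : Fin n → ZMod 2) ∉ Set.range fun i => Pi.single i 1 :=
    fun ⟨i, hi⟩ => single_ne_one hn i hi
  have hinj : Injective fun i : Fin n => (Pi.single i 1 : Fin n → ZMod 2) := fun i j hij => by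
    by_contra hne
    simpa [hne] using congrFun hij i
  rw [FQ_neighborSet_zero (by omega), Set.ncard_insert_of_notMem hone,
    Set.ncard_range_of_injective hinj, Nat.card_fin]

lemma FQ_connected_induce_compl_of_three_le (hn : 3 ≤ n) (A : Set (Fin n → ZMod 2))
    (hA : A.ncard ≤ n) : ((FQ n).induce Aᶜ).Connected := by
  set i₀ : Fin n := ⟨0, by omega⟩
  have hi₀ : i₀ ∉ univ.erase i₀ := notMem_erase i₀ _
  set C : ZMod 2 → Set (Fin n → ZMod 2) := fun b => subcube (univ.erase i₀) (update 0 i₀ b)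
  have hsubcube_univ : subcube (insert i₀ (univ.erase i₀)) (0 : Fin n → ZMod 2) = .univ := by
    rw [insert_erase (mem_univ i₀), subcube_univ]
  have hsplit (b : ZMod 2) : Aᶜ = (C b \ A) ∪ (C (b + 1) \ A) := by
    rw [← Set.union_sdiff_distrib, ← subcube_insert hi₀, hsubcube_univ,
      Set.compl_eq_univ_sdiff]
  have hsum (b : ZMod 2) : (A ∩ C b).ncard + (A ∩ C (b + 1)).ncard = A.ncard := by
    rw [ncard_inter_subcube_update_add hi₀, hsubcube_univ, Set.inter_univ]
  have hhalf (b : ZMod 2) (hb : (A ∩ C b).ncard ≤ n - 2) :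
      ((FQ n).induce (C b \ A)).Connected := by
    refine (hypercube_connected_induce_subcube_diff _ _ A
      (hb.trans_lt (lt_max_of_lt_left ?_))).induce_mono hypercube_le_FQ
    rw [card_erase_of_mem (mem_univ _), card_univ, Fintype.card_fin]
    omega
  by_cases hlight : ∀ b, (A ∩ C b).ncard ≤ n - 2
  · have hcount : (A ∩ C 0).ncard + (A ∩ C (0 + 1)).ncard < (C 0).ncard := by
      obtain ⟨k, rfl⟩ : ∃ k, n = k + 3 := ⟨n - 3, by omega⟩
      have := Nat.lt_two_pow_self (n := k)
      rw [hsum, ncard_subcube, card_erase_of_mem (mem_univ _), card_univ, Fintype.card_fin,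
        show k + 3 - 1 = k + 2 by omega, pow_add]
      omega
    obtain ⟨w, hw, hwA, hwA'⟩ := Set.exists_notMem_and_map_notMem (add_left_injective _)
      (fun x hx => add_single_mem_subcube_update hi₀ hx) hcount
    rw [hsplit 0]
    exact SimpleGraph.connected_induce_union (hhalf 0 (hlight 0)).preconnected
      (hhalf 1 (hlight 1)).preconnected ⟨hw, hwA⟩
      ⟨add_single_mem_subcube_update hi₀ hw, hwA'⟩
      (hypercube_le_FQ (hypercube_adj_add_single w i₀))
  · push Not at hlight
    obtain ⟨b, hb⟩ := hlight
    have hle : (A ∩ C (b + 1)).ncard ≤ 1 := by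
      have := hsum b
      omega
    rw [hsplit b]
    refine SimpleGraph.connected_induce_union_of_forall_exists_adj (hhalf _ (by omega))
      fun x ⟨hx, _⟩ => ?_
    have hx1 : x + 1 ∈ C (b + 1) := by
      rw [mem_subcube_update hi₀, hsubcube_univ] at hx ⊢
      simp [hx.2]
    exact (FQ n).exists_adj_mem_sdiff_of_ncard_inter_le_one hle
      (fun h => single_ne_one (by omega) i₀ (add_left_cancel h))
      (add_single_mem_subcube_update hi₀ hx) hx1
      (hypercube_le_FQ (hypercube_adj_add_single x i₀)) (FQ_adj_add_one (by omega) x)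

lemma FQ_connected_induce_compl (hn : 2 ≤ n) (A : Set (Fin n → ZMod 2)) (hA : A.ncard ≤ n) :
    ((FQ n).induce Aᶜ).Connected := by
  obtain rfl | hn := hn.eq_or_lt
  · have : Nonempty ↥Aᶜ := Set.Nonempty.to_subtype <| Set.nonempty_compl.2 fun h => by
      simp [h] at hA
    rw [FQ_two_eq_top, SimpleGraph.induce_top]
    exact SimpleGraph.connected_top
  · exact FQ_connected_induce_compl_of_three_le hn A hA

end FoldedHypercube

/-- The vertex connectivity of FQ_n is n+1: removing fewer than n+1 vertices leaves
a connected graph, while some set of n+1 vertices leaves a graph that is disconnected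
or has at most one vertex. -/
theorem fq_connectivity (n : ℕ) (hn : 2 ≤ n) :
    (∀ A : Set (Fin n → ZMod 2), A.ncard < n + 1 →
        ((FQ n).induce Aᶜ).Connected) ∧
    (∃ A : Set (Fin n → ZMod 2), A.ncard = n + 1 ∧
        (¬ ((FQ n).induce Aᶜ).Connected ∨ Aᶜ.Subsingleton)) :=
  ⟨fun A hA => FQ_connected_induce_compl hn A (Nat.lt_succ_iff.1 hA),
    (FQ n).neighborSet 0, ncard_FQ_neighborSet_zero hn,
    (FQ n).not_connected_induce_compl_neighborSet_or_subsingleton 0⟩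
end
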